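/- arXiv:1712.05196 — 3 statements merged into one kernel-verified Lean document; each statement's English description precedes it below -/
import Mathlib

section
/- Let T : Γ → Homeo(X) be an action of a countable group Γ on a topological space X, B a topological abelian group (e.g. a Banach space), h : Γ × X → B a continuous cocycle, and x₀ ∈ X. Define E(h, x₀) := { r ∈ B : for every ε > 0 and every open neighborhood U of x₀, there exists n ∈ Γ with T_n x₀ ∈ U and ‖h(n, x₀) − r‖ < ε }. Then E(h, x₀) is closed in B and is a subsemigroup: if s, t ∈ E(h, x₀) then s + t ∈ E(h, x₀). -/
/-- the set of topological essential values E(h, x₀) is a closed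
subsemigroup of B. -/
theorem stmt_5 {Γ X B : Type*} [Group Γ] [Countable Γ] [TopologicalSpace X]
    [NormedAddCommGroup B] [NormedSpace ℝ B]
    (T : Γ → X ≃ₜ X) (hT : ∀ n k : Γ, ∀ x : X, T (n * k) x = T n (T k x))
    (h : Γ → X → B)
    (hcont : ∀ n : Γ, Continuous (h n))
    (hcoc : ∀ n k : Γ, ∀ x : X, h (n * k) x = h k x + h n (T k x))
    (x₀ : X)
    (E : Set B)
    (hE : E = {r : B | ∀ ε > (0 : ℝ), ∀ U : Set X, IsOpen U → x₀ ∈ U →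
      ∃ n : Γ, T n x₀ ∈ U ∧ ‖h n x₀ - r‖ < ε}) :
    IsClosed E ∧ ∀ s ∈ E, ∀ t ∈ E, s + t ∈ E := by
  subst hE
  constructor
  · rw [← isOpen_compl_iff, isOpen_iff_forall_mem_open]
    intro r hr
    simp only [Set.mem_compl_iff, Set.mem_setOf_eq, not_forall] at hr
    obtain ⟨ε, hε, U, hUo, hx₀U, hn⟩ := hr
    push_neg at hn
    refine ⟨Metric.ball r (ε / 2), ?_, Metric.isOpen_ball, Metric.mem_ball_self (by linarith)⟩
    intro r' hr'
    simp only [Set.mem_compl_iff, Set.mem_setOf_eq, not_forall]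
    refine ⟨ε / 2, by linarith, U, hUo, hx₀U, ?_⟩
    push_neg
    intro n hnU
    have := hn n hnU
    have hd : dist r' r < ε / 2 := hr'
    rw [dist_eq_norm] at hd
    have : ε ≤ ‖h n x₀ - r'‖ + ‖r' - r‖ := le_trans this (norm_sub_le_norm_sub_add_norm_sub _ _ _)
    linarith
  · intro s hs t ht ε hε U hUo hx₀U
    obtain ⟨n, hnU, hns⟩ := hs (ε / 4) (by linarith) U hUo hx₀U
    set V : Set X := (T n) ⁻¹' U ∩ {y | ‖h n y - h n x₀‖ < ε / 4} with hV
    have hVo : IsOpen V := by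
      apply IsOpen.inter (hUo.preimage (T n).continuous)
      have : Continuous fun y => ‖h n y - h n x₀‖ := ((hcont n).sub continuous_const).norm
      exact isOpen_lt this continuous_const
    have hx₀V : x₀ ∈ V := ⟨hnU, by simp [hε.le]; linarith⟩
    obtain ⟨k, hkV, hkt⟩ := ht (ε / 2) (by linarith) V hVo hx₀V
    refine ⟨n * k, ?_, ?_⟩
    · rw [hT]; exact hkV.1
    · rw [hcoc]
      have h1 : ‖h n (T k x₀) - s‖ ≤ ‖h n (T k x₀) - h n x₀‖ + ‖h n x₀ - s‖ :=
        norm_sub_le_norm_sub_add_norm_sub _ _ _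
      have h2 : ‖h n (T k x₀) - h n x₀‖ < ε / 4 := hkV.2
      calc ‖h k x₀ + h n (T k x₀) - (s + t)‖
          = ‖(h k x₀ - t) + (h n (T k x₀) - s)‖ := by congr 1; abel
        _ ≤ ‖h k x₀ - t‖ + ‖h n (T k x₀) - s‖ := norm_add_le _ _
        _ < ε := by linarith
end

section
/- Let T : Γ → Homeo(X) be a group action on a topological space X, B a Banach space, h : Γ × X → B a continuous cocycle, and x₀ ∈ X a transitive point for T (i.e. the orbit {T_γ x₀ : γ ∈ Γ} is dense in X). If E(h, x₀) = B, then the orbit closure of (x₀, 0) under the skew product action T^{(h)}_n(x, z) := (T_n x, z + h(n, x)) equals X × B. -/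
/-- if x₀ is a transitive point and every element of B is an
essential value of the cocycle h at x₀, then the skew-product orbit of
(x₀, 0) is dense in X × B. -/
theorem stmt_6 {Γ X B : Type*} [Group Γ] [TopologicalSpace X]
    [NormedAddCommGroup B] [NormedSpace ℝ B]
    (T : Γ → X ≃ₜ X) (hT : ∀ n k : Γ, ∀ x : X, T (n * k) x = T n (T k x))
    (h : Γ → X → B)
    (hcont : ∀ n : Γ, Continuous (h n))
    (hcoc : ∀ n k : Γ, ∀ x : X, h (n * k) x = h k x + h n (T k x))
    (x₀ : X) (htrans : Dense (Set.range fun n : Γ => T n x₀))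
    (hEV : ∀ r : B, ∀ ε > (0 : ℝ), ∀ U : Set X, IsOpen U → x₀ ∈ U →
      ∃ n : Γ, T n x₀ ∈ U ∧ ‖h n x₀ - r‖ < ε) :
    closure (Set.range fun n : Γ => ((T n x₀, (0 : B) + h n x₀) : X × B)) =
      Set.univ := by
  rw [Set.eq_univ_iff_forall]
  rintro ⟨x, b⟩
  rw [mem_closure_iff_nhds]
  intro S hS
  rw [nhds_prod_eq, Filter.mem_prod_iff] at hS
  obtain ⟨V, hV, W, hW, hVW⟩ := hS
  obtain ⟨ε, hε, hball⟩ := Metric.mem_nhds_iff.mp hW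
  obtain ⟨V', hV'sub, hV'open, hxV'⟩ := mem_nhds_iff.mp hV
  -- find k with T k x₀ ∈ V'
  obtain ⟨y, ⟨k, hky⟩, hyV'⟩ := htrans.exists_mem_open hV'open ⟨x, hxV'⟩
  -- build a neighborhood U of x₀
  set U : Set X := (T k) ⁻¹' V' ∩ {z | ‖h k z - h k x₀‖ < ε / 2} with hU
  have hUopen : IsOpen U := by
    apply IsOpen.inter
    · exact hV'open.preimage (T k).continuous
    · have : Continuous fun z => ‖h k z - h k x₀‖ :=
        ((hcont k).sub continuous_const).norm
      exact isOpen_lt this continuous_const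
  have hx₀U : x₀ ∈ U := by
    constructor
    · show T k x₀ ∈ V'
      simp only [] at hky; rw [hky]; exact hyV'
    · simp [hε]
  obtain ⟨n, hnU, hn⟩ := hEV (b - h k x₀) (ε / 2) (by linarith) U hUopen hx₀U
  refine ⟨(T (k * n) x₀, (0 : B) + h (k * n) x₀), ?_, ⟨k * n, rfl⟩⟩
  apply hVW
  constructor
  · show T (k * n) x₀ ∈ V
    rw [hT]
    exact hV'sub hnU.1
  · show (0 : B) + h (k * n) x₀ ∈ W
    apply hball
    rw [Metric.mem_ball, dist_eq_norm, zero_add, hcoc]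
    have : h n x₀ + h k (T n x₀) - b
        = (h n x₀ - (b - h k x₀)) + (h k (T n x₀) - h k x₀) := by abel
    rw [this]
    calc ‖(h n x₀ - (b - h k x₀)) + (h k (T n x₀) - h k x₀)‖
        ≤ ‖h n x₀ - (b - h k x₀)‖ + ‖h k (T n x₀) - h k x₀‖ := norm_add_le _ _
      _ < ε / 2 + ε / 2 := add_lt_add hn hnU.2
      _ = ε := by ring
end

section
/- Let S be a finite set with a map φ : S → ℝ^D such that the closed semigroup generated by φ(S) is all of ℝ^D. Let X = S^ℤ with the shift T, and define the skew product T_φ(x, z) := (Tx, z + φ(x₀)) on X × ℝ^D. Then T_φ is topologically transitive. -/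
/-- The skew product over the full shift on S^ℤ determined by φ : S → ℝ^D,
namely T_φ(x, z) = (Tx, z + φ(x₀)), as a bijection of (ℤ → S) × ℝ^D. -/
def shiftSkew {S : Type*} {D : ℕ} (φ : S → (Fin D → ℝ)) :
    Equiv.Perm ((ℤ → S) × (Fin D → ℝ)) where
  toFun p := (fun n => p.1 (n + 1), p.2 + φ (p.1 0))
  invFun q := (fun n => q.1 (n - 1), q.2 - φ (q.1 (-1)))
  left_inv p := by
    refine Prod.ext (funext fun n => by norm_num) ?_
    show p.2 + φ (p.1 0) - φ (p.1 (-1 + 1)) = p.2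
    norm_num
  right_inv q := by
    refine Prod.ext (funext fun n => by norm_num) ?_
    show q.2 - φ (q.1 (-1)) + φ (q.1 (0 - 1)) = q.2
    norm_num

section aux
variable {S : Type*} {D : ℕ} (φ : S → (Fin D → ℝ))

lemma shiftSkew_pow (n : ℕ) (p : (ℤ → S) × (Fin D → ℝ)) :
    (shiftSkew φ ^ n) p =
      (fun i => p.1 (i + (n : ℤ)), p.2 + ∑ j ∈ Finset.range n, φ (p.1 (j : ℤ))) := by
  induction n generalizing p with
  | zero => simp
  | succ n ih =>
    rw [pow_succ', Equiv.Perm.mul_apply, ih p]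
    refine Prod.ext (funext fun i => ?_) ?_
    · show p.1 (i + 1 + n) = p.1 (i + (n + 1 : ℕ))
      congr 1; push_cast; ring
    · show p.2 + ∑ j ∈ Finset.range n, φ (p.1 (j : ℤ)) + φ (p.1 (0 + (n:ℤ))) = _
      rw [Finset.sum_range_succ]
      push_cast
      norm_num
      abel

lemma listSum_getD (l : List S) (d : S) :
    ∑ k ∈ Finset.range l.length, φ (l.getD k d) = (l.map φ).sum := by
  induction l with
  | nil => simp
  | cons a l ih =>
    rw [List.length_cons, Finset.sum_range_succ']
    simp only [List.getD_cons_succ, List.getD_cons_zero, List.map_cons, List.sum_cons]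
    rw [ih]
    abel

variable [TopologicalSpace S] [DiscreteTopology S]

lemma shiftSkew_cont : Continuous ⇑(shiftSkew φ) :=
  Continuous.prodMk (continuous_pi fun n => (continuous_apply (n + 1)).comp continuous_fst)
    (continuous_snd.add ((continuous_of_discreteTopology).comp
      ((continuous_apply (0 : ℤ)).comp continuous_fst)))

lemma shiftSkew_inv_cont : Continuous ⇑(shiftSkew φ)⁻¹ :=
  Continuous.prodMk (continuous_pi fun n => (continuous_apply (n - 1)).comp continuous_fst)
    (continuous_snd.sub ((continuous_of_discreteTopology).comp
      ((continuous_apply (-1 : ℤ)).comp continuous_fst)))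

lemma shiftSkew_zpow_cont (n : ℤ) : Continuous ⇑(shiftSkew φ ^ n) := by
  match n with
  | Int.ofNat m =>
    rw [Int.ofNat_eq_natCast, zpow_natCast, Equiv.Perm.coe_pow]
    exact (shiftSkew_cont φ).iterate m
  | Int.negSucc m =>
    rw [zpow_negSucc, ← inv_pow, Equiv.Perm.coe_pow]
    exact (shiftSkew_inv_cont φ).iterate (m + 1)

lemma cyl_nhds (U : Set ((ℤ → S) × (Fin D → ℝ))) (hU : IsOpen U)
    (x : ℤ → S) (z : Fin D → ℝ) (h : (x, z) ∈ U) :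
    ∃ (F : Finset ℤ) (ε : ℝ), 0 < ε ∧
      ∀ y w, (∀ i ∈ F, y i = x i) → dist w z < ε → (y, w) ∈ U := by
  have hmem : U ∈ nhds (x, z) := hU.mem_nhds h
  rw [mem_nhds_prod_iff] at hmem
  obtain ⟨u, hu, v, hv, huv⟩ := hmem
  rw [nhds_pi, Filter.mem_pi'] at hu
  obtain ⟨I, t, ht, htu⟩ := hu
  obtain ⟨ε, hε, hball⟩ := Metric.mem_nhds_iff.1 hv
  refine ⟨I, ε, hε, fun y w hy hw => ?_⟩
  refine huv ⟨htu fun i hi => ?_, hball hw⟩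
  show y i ∈ t i
  rw [hy i (by exact_mod_cast hi)]
  exact mem_of_mem_nhds (ht i)

/-- The key transitivity step: from any open set one can reach any other open set. -/
lemma shiftSkew_core (s0 : S)
    (hgen : closure {y : Fin D → ℝ |
        ∃ l : List S, l ≠ [] ∧ y = (l.map φ).sum} = Set.univ)
    (U V : Set ((ℤ → S) × (Fin D → ℝ))) (hU : IsOpen U) (hV : IsOpen V)
    (hUne : U.Nonempty) (hVne : V.Nonempty) :
    ∃ p ∈ U, ∃ n : ℤ, (shiftSkew φ ^ n) p ∈ V := by
  obtain ⟨⟨x1, z1⟩, hp1⟩ := hUne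
  obtain ⟨⟨x2, z2⟩, hp2⟩ := hVne
  obtain ⟨F1, ε1, hε1, h1⟩ := cyl_nhds U hU x1 z1 hp1
  obtain ⟨F2, ε2, hε2, h2⟩ := cyl_nhds V hV x2 z2 hp2
  set a : ℕ := F1.sup fun i => i.toNat + 1 with ha_def
  have ha : ∀ i ∈ F1, (i : ℤ) < (a : ℤ) := by
    intro i hi
    have h1 : i.toNat + 1 ≤ a := Finset.le_sup (f := fun i : ℤ => i.toNat + 1) hi
    have h2 := Int.self_le_toNat i
    omega
  set m : ℕ := F2.sup fun i => (-i).toNat with hm_def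
  have hm : ∀ i ∈ F2, -(m : ℤ) ≤ i := by
    intro i hi
    have h1 : (-i).toNat ≤ m := Finset.le_sup (f := fun i : ℤ => (-i).toNat) hi
    have h2 := Int.self_le_toNat (-i)
    omega
  set A : Fin D → ℝ := ∑ j ∈ Finset.range a,
    φ (if ((j : ℤ) ∈ F1) then x1 (j : ℤ) else s0) with hA_def
  set B : Fin D → ℝ := ∑ k ∈ Finset.range m,
    φ (if (((k : ℤ) - (m : ℤ)) ∈ F2) then x2 ((k : ℤ) - (m : ℤ)) else s0) with hB_def
  set v : Fin D → ℝ := z2 - z1 - A - B with hv_def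
  have hvmem : v ∈ closure {y : Fin D → ℝ |
      ∃ l : List S, l ≠ [] ∧ y = (l.map φ).sum} := by rw [hgen]; trivial
  obtain ⟨y, hy_mem, hy_dist⟩ := Metric.mem_closure_iff.1 hvmem ε2 hε2
  obtain ⟨l, -, hl⟩ := hy_mem
  set L : ℕ := l.length with hL_def
  set n : ℕ := a + L + m with hn_def
  set x : ℤ → S := fun j =>
    if j < (a : ℤ) then (if j ∈ F1 then x1 j else s0)
    else if j < (a : ℤ) + (L : ℤ) then l.getD (j - (a : ℤ)).toNat s0
    else if (j - (n : ℤ)) ∈ F2 then x2 (j - (n : ℤ)) else s0 with hx_def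
  refine ⟨(x, z1), ?_, (n : ℤ), ?_⟩
  · refine h1 x z1 (fun i hi => ?_) (by simpa using hε1)
    have hia := ha i hi
    simp only [hx_def]
    rw [if_pos hia, if_pos hi]
  · rw [zpow_natCast, shiftSkew_pow]
    refine h2 _ _ (fun i hi => ?_) ?_
    · have him := hm i hi
      have h3 : ¬ (i + (n : ℤ) < (a : ℤ)) := by simp only [hn_def]; push_cast; omega
      have h4 : ¬ (i + (n : ℤ) < (a : ℤ) + (L : ℤ)) := by simp only [hn_def]; push_cast; omega
      show x (i + (n : ℤ)) = x2 i
      simp only [hx_def]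
      rw [if_neg h3, if_neg h4]
      have he : i + (n : ℤ) - (n : ℤ) = i := by ring
      rw [he, if_pos hi]
    · have hsum : ∑ j ∈ Finset.range n, φ (x (j : ℤ)) = A + y + B := by
        rw [hn_def, Finset.sum_range_add, Finset.sum_range_add]
        congr 1
        · congr 1
          · refine Finset.sum_congr rfl fun j hj => ?_
            rw [Finset.mem_range] at hj
            have hja : (j : ℤ) < (a : ℤ) := by exact_mod_cast hj
            simp only [hx_def]
            rw [if_pos hja]
          · rw [hl, ← listSum_getD φ l s0]
            refine Finset.sum_congr rfl fun k hk => ?_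
            rw [Finset.mem_range] at hk
            have h3 : ¬ ((((a + k : ℕ)) : ℤ) < (a : ℤ)) := by push_cast; omega
            have h4 : ((((a + k : ℕ)) : ℤ) < (a : ℤ) + (L : ℤ)) := by push_cast; omega
            simp only [hx_def]
            rw [if_neg h3, if_pos h4]
            have he : ((((a + k : ℕ)) : ℤ) - (a : ℤ)).toNat = k := by push_cast; omega
            rw [he]
        · refine Finset.sum_congr rfl fun k hk => ?_
          rw [Finset.mem_range] at hk
          have h3 : ¬ ((((a + L + k : ℕ)) : ℤ) < (a : ℤ)) := by push_cast; omega
          have h4 : ¬ ((((a + L + k : ℕ)) : ℤ) < (a : ℤ) + (L : ℤ)) := by push_cast; omega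
          have he : (((a + L + k : ℕ)) : ℤ) - (n : ℤ) = (k : ℤ) - (m : ℤ) := by
            simp only [hn_def]; push_cast; ring
          simp only [hx_def]
          rw [if_neg h3, if_neg h4, he]
      show dist (z1 + ∑ j ∈ Finset.range n, φ (x (j : ℤ))) z2 < ε2
      rw [hsum, dist_eq_norm]
      have he2 : z1 + (A + y + B) - z2 = y - v := by rw [hv_def]; abel
      rw [he2, ← dist_eq_norm, dist_comm]
      exact hy_dist

end aux

/-- if the closed semigroup generated by φ(S) is all of ℝ^D, then
the skew product T_φ over the full shift on S^ℤ is topologically transitive. -/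
theorem stmt_11 {S : Type*} [Finite S] [TopologicalSpace S] [DiscreteTopology S]
    {D : ℕ} (φ : S → (Fin D → ℝ))
    (hgen : closure {y : Fin D → ℝ |
        ∃ l : List S, l ≠ [] ∧ y = (l.map φ).sum} = Set.univ) :
    ∃ p : (ℤ → S) × (Fin D → ℝ),
      Dense (Set.range fun n : ℤ => (shiftSkew φ ^ n) p) := by
  classical
  -- S is nonempty
  obtain ⟨y0, l0, hl0, -⟩ : ∃ y0 : Fin D → ℝ,
      ∃ l : List S, l ≠ [] ∧ y0 = (l.map φ).sum := by
    have h0 : (0 : Fin D → ℝ) ∈ closure {y : Fin D → ℝ |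
        ∃ l : List S, l ≠ [] ∧ y = (l.map φ).sum} := by rw [hgen]; trivial
    obtain ⟨y0, hy0, -⟩ := Metric.mem_closure_iff.1 h0 1 one_pos
    exact ⟨y0, hy0⟩
  set s0 : S := l0.head hl0 with hs0
  set X := (ℤ → S) × (Fin D → ℝ)
  haveI : Nonempty X := ⟨(fun _ => s0, 0)⟩
  -- the countable family of open dense sets
  set f : TopologicalSpace.countableBasis X → Set X :=
    fun b => ⋃ n : ℤ, (⇑(shiftSkew φ ^ n)) ⁻¹' (b : Set X) with hf_def
  have ho : ∀ b, IsOpen (f b) := fun b =>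
    isOpen_iUnion fun n => (shiftSkew_zpow_cont φ n).isOpen_preimage _
      (TopologicalSpace.isOpen_of_mem_countableBasis b.2)
  have hd : ∀ b, Dense (f b) := by
    intro b
    rw [dense_iff_inter_open]
    intro W hW hWne
    obtain ⟨p, hpW, n, hpn⟩ := shiftSkew_core φ s0 hgen W b hW
      (TopologicalSpace.isOpen_of_mem_countableBasis b.2) hWne
      (TopologicalSpace.nonempty_of_mem_countableBasis b.2)
    exact ⟨p, hpW, Set.mem_iUnion.2 ⟨n, hpn⟩⟩
  obtain ⟨p, hp⟩ := (dense_iInter_of_isOpen ho hd).nonempty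
  refine ⟨p, dense_iff_inter_open.2 fun W hW hWne => ?_⟩
  obtain ⟨q, hq⟩ := hWne
  obtain ⟨b, hb, hqb, hbW⟩ :=
    (TopologicalSpace.isBasis_countableBasis X).exists_subset_of_mem_open hq hW
  have hpb : p ∈ f ⟨b, hb⟩ := Set.mem_iInter.1 hp ⟨b, hb⟩
  obtain ⟨n, hn⟩ := Set.mem_iUnion.1 hpb
  exact ⟨(shiftSkew φ ^ n) p, hbW hn, ⟨n, rfl⟩⟩
end
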